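/- For every x ∈ ℝ^n, the limit as p → ∞ of (Σ_{i∈I} x_i^{2p+1})^{1/(2p+1)} (real odd roots) exists and equals F_I(x), the n-ary extension ⊞_{i∈I} x_i. -/

import Mathlib

/-!
Since `t ↦ t ^ (2p+1)` is odd, grouping the `x i` by absolute value gives
`∑ i ∈ I, x i ^ (2p+1) = ∑_{a > 0} ξ(a) a ^ (2p+1)`. If `ξ(x j) = 0` for all `j ∈ I` this vanishes,
so `r = 0 = F_I(x)`. Otherwise let `M = max {|x j| : ξ(x j) ≠ 0}`: then `ξ(M) ≠ 0` and `ξ(a) = 0`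
for `a > M`, so `(r p / M) ^ (2p+1) → ξ(M)`. A sequence whose odd powers tend to `c ≠ 0` has
`|s p| = |s p ^ k| ^ (1/k) → 1` and eventually the sign of `c`, so `r p → M · sign ξ(M) = F_I(x)`.
-/

open scoped Classical

/-- ξ_I[x](α): signed count of occurrences of α among the x i, i ∈ I. -/
noncomputable def xiF {ι : Type*} (I : Finset ι) (x : ι → ℝ) (α : ℝ) : ℤ :=
  ((I.filter fun i => x i = α).card : ℤ) - ((I.filter fun i => x i = -α).card : ℤ)

/-- the n-ary limit operation F_I, i.e. ⊞_{i∈I} x_i. -/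
noncomputable def FF {ι : Type*} (I : Finset ι) (x : ι → ℝ) : ℝ :=
  if h : (I.filter fun j => xiF I x (x j) ≠ 0).Nonempty then
    if 0 < xiF I x ((I.filter fun j => xiF I x (x j) ≠ 0).sup' h fun i => |x i|) then
      (I.filter fun j => xiF I x (x j) ≠ 0).sup' h x
    else if xiF I x ((I.filter fun j => xiF I x (x j) ≠ 0).sup' h fun i => |x i|) < 0 then
      (I.filter fun j => xiF I x (x j) ≠ 0).inf' h x
    else 0
  else 0

open Filter Topology Finset

section OddRoot

variable {α : Type*} {l : Filter α} {s : α → ℝ} {k : α → ℕ} {c : ℝ}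

theorem tendsto_abs_of_tendsto_pow (hk : Tendsto k l atTop)
    (hs : Tendsto (fun p => s p ^ k p) l (𝓝 c)) (hc : c ≠ 0) :
    Tendsto (fun p => |s p|) l (𝓝 1) := by
  have hinv : Tendsto (fun p => ((k p : ℝ))⁻¹) l (𝓝 0) :=
    tendsto_inv_atTop_zero.comp (tendsto_natCast_atTop_atTop.comp hk)
  have hroot := hs.abs.rpow hinv (Or.inl (abs_ne_zero.2 hc))
  rw [Real.rpow_zero] at hroot
  refine hroot.congr' ?_
  filter_upwards [hk.eventually_ne_atTop 0] with p hp
  rw [abs_pow, Real.pow_rpow_inv_natCast (abs_nonneg _) hp]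

theorem tendsto_one_of_tendsto_odd_pow (hk : Tendsto k l atTop) (hodd : ∀ p, Odd (k p))
    (hs : Tendsto (fun p => s p ^ k p) l (𝓝 c)) (hc : 0 < c) :
    Tendsto s l (𝓝 1) := by
  refine (tendsto_abs_of_tendsto_pow hk hs hc.ne').congr' ?_
  filter_upwards [hs.eventually_const_lt hc] with p hp
  exact abs_of_pos ((hodd p).pow_pos_iff.1 hp)

theorem tendsto_sign_of_tendsto_odd_pow (hk : Tendsto k l atTop) (hodd : ∀ p, Odd (k p))
    (hs : Tendsto (fun p => s p ^ k p) l (𝓝 c)) (hc : c ≠ 0) :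
    Tendsto s l (𝓝 (SignType.sign c)) := by
  rcases hc.lt_or_gt with hc | hc
  · have hneg : Tendsto (fun p => (-s p) ^ k p) l (𝓝 (-c)) := by
      simpa only [(hodd _).neg_pow] using hs.neg
    simpa [sign_neg hc] using (tendsto_one_of_tendsto_odd_pow hk hodd hneg (neg_pos.2 hc)).neg
  · simpa [sign_pos hc] using tendsto_one_of_tendsto_odd_pow hk hodd hs hc

end OddRoot

theorem tendsto_two_mul_add_one_atTop : Tendsto (fun p : ℕ => 2 * p + 1) atTop atTop :=
  tendsto_atTop_mono (fun p => show p ≤ 2 * p + 1 by omega) tendsto_id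

section SignedCount

variable {ι : Type*} (I : Finset ι) (x : ι → ℝ)

theorem xiF_neg (a : ℝ) : xiF I x (-a) = -xiF I x a := by
  simp [xiF]

theorem xiF_zero : xiF I x 0 = 0 := by
  simp [xiF]

theorem xiF_abs_eq_zero_iff (a : ℝ) : xiF I x |a| = 0 ↔ xiF I x a = 0 := by
  rcases abs_choice a with h | h <;> simp [h, xiF_neg]

theorem exists_eq_of_xiF_pos {a : ℝ} (ha : 0 < xiF I x a) : ∃ i ∈ I, x i = a := by
  by_contra! h
  simp [xiF, filter_false_of_mem h] at ha
  omega

theorem sum_filter_abs_eq_xiF_mul {f : ℝ → ℝ} (hf : ∀ a, f (-a) = -f a) {a : ℝ} (ha : 0 ≤ a) :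
    ∑ i ∈ I with |x i| = a, f (x i) = xiF I x a * f a := by
  rcases ha.eq_or_lt with rfl | ha
  · have hf0 : f 0 = 0 := by linarith [show f 0 = -f 0 by simpa using hf 0]
    rw [xiF_zero, Int.cast_zero, zero_mul]
    exact sum_eq_zero fun i hi => by rw [abs_eq_zero.1 (mem_filter.1 hi).2, hf0]
  · have hsplit : I.filter (|x ·| = a) = I.filter (x · = a) ∪ I.filter (x · = -a) := by
      simp only [← filter_or, abs_eq ha.le]
    have hdisj : Disjoint (I.filter (x · = a)) (I.filter (x · = -a)) :=
      disjoint_filter.2 fun i _ h h' => by linarith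
    have hconst : ∀ b, ∑ i ∈ I with x i = b, f (x i) = #(I.filter (x · = b)) * f b := fun b => by
      rw [sum_congr rfl fun i hi => by rw [(mem_filter.1 hi).2], sum_const, nsmul_eq_mul]
    rw [hsplit, sum_union hdisj, hconst, hconst, hf, xiF]
    push_cast
    ring

theorem sum_odd_eq_sum_xiF_mul {f : ℝ → ℝ} (hf : ∀ a, f (-a) = -f a) :
    ∑ i ∈ I, f (x i) = ∑ a ∈ I.image (|x ·|), xiF I x a * f a := by
  rw [← sum_fiberwise_of_maps_to fun i hi => mem_image_of_mem (|x ·|) hi]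
  refine sum_congr rfl fun a ha => ?_
  obtain ⟨i, -, rfl⟩ := mem_image.1 ha
  exact sum_filter_abs_eq_xiF_mul I x hf (abs_nonneg _)

end SignedCount

section Peak

variable {ι : Type*} {I : Finset ι} {x : ι → ℝ}

variable (I x) in
noncomputable def xiSupport : Finset ι := I.filter fun j => xiF I x (x j) ≠ 0

theorem FF_of_not_nonempty (h : ¬(xiSupport I x).Nonempty) : FF I x = 0 :=
  dif_neg h

theorem sum_odd_eq_zero_of_not_nonempty (h : ¬(xiSupport I x).Nonempty) {f : ℝ → ℝ}
    (hf : ∀ a, f (-a) = -f a) : ∑ i ∈ I, f (x i) = 0 := by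
  rw [sum_odd_eq_sum_xiF_mul I x hf]
  refine sum_eq_zero fun a ha => ?_
  obtain ⟨i, hi, rfl⟩ := mem_image.1 ha
  have : xiF I x (x i) = 0 := by_contra fun hξ => h ⟨i, mem_filter.2 ⟨hi, hξ⟩⟩
  rw [(xiF_abs_eq_zero_iff I x _).2 this, Int.cast_zero, zero_mul]

variable (h : (xiSupport I x).Nonempty)
include h

theorem exists_mem_abs_eq_sup' :
    ∃ j ∈ I, xiF I x (x j) ≠ 0 ∧ |x j| = (xiSupport I x).sup' h (|x ·|) := by
  obtain ⟨j, hj, hjM⟩ := exists_mem_eq_sup' h (|x ·|)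
  exact ⟨j, (mem_filter.1 hj).1, (mem_filter.1 hj).2, hjM.symm⟩

theorem xiF_sup'_ne_zero : xiF I x ((xiSupport I x).sup' h (|x ·|)) ≠ 0 := by
  obtain ⟨j, -, hj, hjM⟩ := exists_mem_abs_eq_sup' h
  rwa [← hjM, Ne, xiF_abs_eq_zero_iff]

theorem sup'_abs_pos : 0 < (xiSupport I x).sup' h (|x ·|) := by
  obtain ⟨j, -, hj, hjM⟩ := exists_mem_abs_eq_sup' h
  refine hjM ▸ abs_pos.2 fun hx0 => hj ?_
  rw [hx0, xiF_zero]

theorem sup'_abs_mem_image : (xiSupport I x).sup' h (|x ·|) ∈ I.image (|x ·|) := by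
  obtain ⟨j, hj, -, hjM⟩ := exists_mem_abs_eq_sup' h
  exact hjM ▸ mem_image_of_mem _ hj

theorem abs_le_sup'_of_xiF_ne_zero {i : ι} (hi : i ∈ I) (hξ : xiF I x |x i| ≠ 0) :
    |x i| ≤ (xiSupport I x).sup' h (|x ·|) :=
  le_sup' (|x ·|) (mem_filter.2 ⟨hi, by rwa [Ne, ← xiF_abs_eq_zero_iff]⟩)

theorem FF_of_nonempty :
    FF I x = if 0 < xiF I x ((xiSupport I x).sup' h (|x ·|)) then (xiSupport I x).sup' h x
      else if xiF I x ((xiSupport I x).sup' h (|x ·|)) < 0 then (xiSupport I x).inf' h x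
      else 0 :=
  dif_pos h

theorem FF_eq_sup'_mul_sign :
    FF I x = (xiSupport I x).sup' h (|x ·|) *
      SignType.sign ((xiF I x ((xiSupport I x).sup' h (|x ·|)) : ℝ)) := by
  rw [FF_of_nonempty h]
  have hξ := xiF_sup'_ne_zero h
  set M := (xiSupport I x).sup' h (|x ·|)
  have habs : ∀ j ∈ xiSupport I x, |x j| ≤ M := fun j hj => le_sup' (|x ·|) hj
  have hmem : ∀ {a}, 0 < xiF I x a → ∃ i ∈ xiSupport I x, x i = a := fun {a} ha => by
    obtain ⟨i, hi, rfl⟩ := exists_eq_of_xiF_pos I x ha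
    exact ⟨i, mem_filter.2 ⟨hi, ha.ne'⟩, rfl⟩
  rcases hξ.lt_or_gt with hneg | hpos
  · obtain ⟨i, hi, hxi⟩ := hmem (a := -M) (by rw [xiF_neg]; omega)
    rw [if_neg hneg.not_gt, if_pos hneg, sign_neg (Int.cast_lt_zero.2 hneg), SignType.coe_neg_one,
      mul_neg_one]
    refine le_antisymm ((inf'_le x hi).trans_eq hxi) (le_inf' h x fun j hj => ?_)
    linarith [neg_abs_le (x j), habs j hj]
  · obtain ⟨i, hi, hxi⟩ := hmem hpos
    rw [if_pos hpos, sign_pos (Int.cast_pos.2 hpos), SignType.coe_one, mul_one]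
    refine le_antisymm (sup'_le h x fun j hj => ?_) (hxi.symm.trans_le (le_sup' x hi))
    linarith [le_abs_self (x j), habs j hj]

theorem tendsto_sum_div_sup'_pow :
    Tendsto (fun p : ℕ => ∑ i ∈ I, (x i / (xiSupport I x).sup' h (|x ·|)) ^ (2 * p + 1)) atTop
      (𝓝 (xiF I x ((xiSupport I x).sup' h (|x ·|)) : ℝ)) := by
  have hM := sup'_abs_pos h
  have hmem := sup'_abs_mem_image h
  set M := (xiSupport I x).sup' h (|x ·|)
  have hgroup : ∀ p : ℕ, ∑ i ∈ I, (x i / M) ^ (2 * p + 1)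
      = ∑ a ∈ I.image (|x ·|), xiF I x a * (a / M) ^ (2 * p + 1) := fun p =>
    sum_odd_eq_sum_xiF_mul I x (f := fun a => (a / M) ^ (2 * p + 1)) fun a => by
      rw [neg_div, (odd_two_mul_add_one p).neg_pow]
  have hlimit : (xiF I x M : ℝ)
      = ∑ a ∈ I.image (|x ·|), if a = M then (xiF I x a : ℝ) else 0 := by
    rw [sum_ite_eq', if_pos hmem]
  rw [tendsto_congr hgroup, hlimit]
  refine tendsto_finsetSum _ fun a ha => ?_
  obtain ⟨i, hi, rfl⟩ := mem_image.1 ha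
  by_cases hξ : xiF I x |x i| = 0
  · simp [hξ]
  rcases (show |x i| ≤ M from abs_le_sup'_of_xiF_ne_zero h hi hξ).lt_or_eq with hlt | heq
  · have hratio : Tendsto (fun p : ℕ => (|x i| / M) ^ (2 * p + 1)) atTop (𝓝 0) :=
      (tendsto_pow_atTop_nhds_zero_of_lt_one (by positivity) ((div_lt_one hM).2 hlt)).comp
        tendsto_two_mul_add_one_atTop
    rw [if_neg hlt.ne]
    simpa using hratio.const_mul (xiF I x |x i| : ℝ)
  · simp [heq, div_self hM.ne']

end Peak

theorem stmt_9_general {n : ℕ} (x : Fin n → ℝ) (I : Finset (Fin n))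
    (r : ℕ → ℝ)
    (hr : ∀ p : ℕ, (r p) ^ (2 * p + 1) = ∑ i ∈ I, (x i) ^ (2 * p + 1)) :
    Filter.Tendsto r Filter.atTop (nhds (FF I x)) := by
  have hodd : ∀ p : ℕ, Odd (2 * p + 1) := odd_two_mul_add_one
  by_cases h : (xiSupport I x).Nonempty
  · have hM := (sup'_abs_pos h).ne'
    set M := (xiSupport I x).sup' h (|x ·|)
    have hpow : ∀ p : ℕ, (r p / M) ^ (2 * p + 1) = ∑ i ∈ I, (x i / M) ^ (2 * p + 1) := fun p => by
      simp only [div_pow, ← sum_div, hr]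
    have hlim := tendsto_sign_of_tendsto_odd_pow tendsto_two_mul_add_one_atTop hodd
      ((tendsto_congr hpow).2 (tendsto_sum_div_sup'_pow h))
      (Int.cast_ne_zero.2 (xiF_sup'_ne_zero h))
    rw [FF_eq_sup'_mul_sign h]
    simpa [mul_div_cancel₀ _ hM] using hlim.const_mul M
  · have hr0 : ∀ p, r p = 0 := fun p =>
      (pow_eq_zero_iff (hodd p).pos.ne').1 <| (hr p).trans <|
        sum_odd_eq_zero_of_not_nonempty h (f := (· ^ (2 * p + 1))) (hodd p).neg_pow
    simp [FF_of_not_nonempty h, funext hr0]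

theorem stmt_9 {n : ℕ} (x : Fin n → ℝ) (I : Finset (Fin n)) (hI : I.Nonempty)
    (r : ℕ → ℝ)
    (hr : ∀ p : ℕ, (r p) ^ (2 * p + 1) = ∑ i ∈ I, (x i) ^ (2 * p + 1)) :
    Filter.Tendsto r Filter.atTop (nhds (FF I x)) :=
  stmt_9_general x I r hr
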